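/- (Dynamic version of Proposition 1) In a finite two-player multistage game, for each player i and each k ∈ ℕ₀, the dynamic Δ^κ-rationalization procedure stabilizes for the level-k type after k steps: Σᵗ_{θ_{ik}} = Σᵏ_{θ_{ik}} for every t ≥ k. -/

import Mathlib

/-!
A level-`k` type's beliefs (DK1) only put weight on opponent levels `0, …, k - 1`. By strong
induction on `k`, those levels have stopped changing after round `k - 1`, so the conditioning
requirement of every later round is, on the support of a level-`k` belief, the one of round `k - 1`:
whatever justified `(θ_k, s)` in round `k` keeps justifying it. Level `0` never loses a strategy,
since its payoff is constant and the uniform level-`0` belief is a conditional probability system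
that strongly believes every round (all of which contain every level-`0` pair).
-/

open scoped BigOperators
open Classical

noncomputable section

/-- A two-player multistage game: feasibility correspondences assigning to each history
(a finite sequence of action profiles, most recent first; `[]` is the root `∅`) the set
of feasible actions of each player. -/
structure MSGame (A B : Type*) where
  feas1 : List (A × B) → Finset A
  feas2 : List (A × B) → Finset B

namespace MSGame

variable {A B : Type*}

/-- A history is terminal iff no player has a feasible action there. -/
def terminal (G : MSGame A B) (h : List (A × B)) : Prop :=
  G.feas1 h = ∅ ∧ G.feas2 h = ∅

/-- Feasible histories: the root is feasible, and a profile may be appended to a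
feasible non-terminal history iff each component is feasible for its player. -/
def feasible (G : MSGame A B) : List (A × B) → Prop
  | [] => True
  | p :: h => feasible G h ∧ ¬G.terminal h ∧ p.1 ∈ G.feas1 h ∧ p.2 ∈ G.feas2 h

/-- Well-formedness: the "wait" convention (an inactive player has exactly her waiting
move, so one feasibility set is empty iff the other is), finitely many feasible
histories, and a nontrivial root. -/
def WellFormed (G : MSGame A B) : Prop :=
  (∀ h : List (A × B), (G.feas1 h = ∅ ↔ G.feas2 h = ∅)) ∧
  {h : List (A × B) | G.feasible h}.Finite ∧ ¬G.terminal []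

/-- The set `H` of non-terminal feasible histories, as a type. -/
def Hist (G : MSGame A B) : Type _ := {h : List (A × B) // G.feasible h ∧ ¬G.terminal h}

end MSGame

/-- A strategy of player 1: a feasible action at every non-terminal feasible history. -/
structure Strat1 {A B : Type*} (G : MSGame A B) where
  act : G.Hist → A
  mem : ∀ h : G.Hist, act h ∈ G.feas1 h.1

/-- A strategy of player 2. -/
structure Strat2 {A B : Type*} (G : MSGame A B) where
  act : G.Hist → B
  mem : ∀ h : G.Hist, act h ∈ G.feas2 h.1

/-- `s ∈ S₁(h)`: player 1's strategy `s` is consistent with reaching history `h`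
(it prescribes, at every proper prefix of `h`, the action played in `h`). -/
def consistent1 {A B : Type*} (G : MSGame A B) (s : Strat1 G) (h : List (A × B)) : Prop :=
  ∀ (h' : G.Hist) (p : A × B) (l : List (A × B)), h = l ++ p :: h'.1 → s.act h' = p.1

/-- `s ∈ S₂(h)`. -/
def consistent2 {A B : Type*} (G : MSGame A B) (s : Strat2 G) (h : List (A × B)) : Prop :=
  ∀ (h' : G.Hist) (p : A × B) (l : List (A × B)), h = l ++ p :: h'.1 → s.act h' = p.2

/-- Fuelled play function. -/
def playAux {A B : Type*} (G : MSGame A B) (s1 : Strat1 G) (s2 : Strat2 G) :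
    ℕ → List (A × B) → List (A × B)
  | 0, h => h
  | n + 1, h =>
      if hf : G.feasible h ∧ ¬G.terminal h then
        playAux G s1 s2 n ((s1.act ⟨h, hf⟩, s2.act ⟨h, hf⟩) :: h)
      else h

/-- The terminal history `ζ(s₁,s₂)` induced by a strategy profile (in a well-formed
game the fuel suffices to reach a terminal history). -/
def play {A B : Type*} (G : MSGame A B) (s1 : Strat1 G) (s2 : Strat2 G) : List (A × B) :=
  playAux G s1 s2 ({h : List (A × B) | G.feasible h}.ncard + 1) []

/-- Player 1's payoff `U₁(θ, s)`: the level-0 type gets constant 0, other levels get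
`v₁` at the induced terminal history. -/
def payU1 {A B : Type*} (G : MSGame A B) (v1 : List (A × B) → ℝ)
    (θ : ℕ) (s1 : Strat1 G) (s2 : Strat2 G) : ℝ :=
  if θ = 0 then 0 else v1 (play G s1 s2)

/-- Player 2's payoff `U₂(θ, s)`. -/
def payU2 {A B : Type*} (G : MSGame A B) (v2 : List (A × B) → ℝ)
    (θ : ℕ) (s1 : Strat1 G) (s2 : Strat2 G) : ℝ :=
  if θ = 0 then 0 else v2 (play G s1 s2)

/-- A conditional probability system of player 1 over (opponent level, opponent
strategy) pairs: at each `h ∈ H` a probability distribution concentrated on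
`Θ × S₂(h)`, satisfying the chain rule. -/
structure CPS2 {A B : Type*} (G : MSGame A B) where
  p : G.Hist → ℕ × Strat2 G → ℝ
  nonneg : ∀ h x, 0 ≤ p h x
  supp : ∀ h x, p h x ≠ 0 → consistent2 G x.2 h.1
  hasSum_one : ∀ h, HasSum (p h) 1
  chain : ∀ h' h'' : G.Hist, h'.1 <:+ h''.1 → h'.1 ≠ h''.1 →
    ∀ x : ℕ × Strat2 G, consistent2 G x.2 h''.1 →
      p h' x = p h'' x * ∑' y : ℕ × Strat2 G, (if consistent2 G y.2 h''.1 then p h' y else 0)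

/-- A conditional probability system of player 2. -/
structure CPS1 {A B : Type*} (G : MSGame A B) where
  p : G.Hist → ℕ × Strat1 G → ℝ
  nonneg : ∀ h x, 0 ≤ p h x
  supp : ∀ h x, p h x ≠ 0 → consistent1 G x.2 h.1
  hasSum_one : ∀ h, HasSum (p h) 1
  chain : ∀ h' h'' : G.Hist, h'.1 <:+ h''.1 → h'.1 ≠ h''.1 →
    ∀ x : ℕ × Strat1 G, consistent1 G x.2 h''.1 →
      p h' x = p h'' x * ∑' y : ℕ × Strat1 G, (if consistent1 G y.2 h''.1 then p h' y else 0)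

/-- Marginal probability of the opponent's level-`t` type at history `h` (player 1's CPS). -/
def margD2 {A B : Type*} {G : MSGame A B} (μ : CPS2 G) (h : G.Hist) (t : ℕ) : ℝ :=
  ∑' s : Strat2 G, μ.p h (t, s)

def margD1 {A B : Type*} {G : MSGame A B} (μ : CPS1 G) (h : G.Hist) (t : ℕ) : ℝ :=
  ∑' s : Strat1 G, μ.p h (t, s)

/-- `f` normalized to the levels `0, …, k-1` (`f^k` in the paper). -/
def fnorm (f : ℕ → ℝ) (k t : ℕ) : ℝ := f t / ∑ ℓ ∈ Finset.range k, f ℓ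

/-- DK1–DK3 (membership in the dynamic `Δ^{θ_{1k}}`); no restriction for `k = 0`. -/
def memDeltaD2 {A B : Type*} (G : MSGame A B) (f : ℕ → ℝ) (k : ℕ) (μ : CPS2 G) : Prop :=
  k ≠ 0 →
    ((∀ (h : G.Hist) (t : ℕ), k ≤ t → margD2 μ h t = 0) ∧
     (∀ h : G.Hist, 0 < margD2 μ h 0 →
        ∀ s : Strat2 G, consistent2 G s h.1 →
          μ.p h (0, s) / margD2 μ h 0 =
            1 / (({s' : Strat2 G | consistent2 G s' h.1}).ncard : ℝ)) ∧
     (∀ hr : G.feasible [] ∧ ¬G.terminal [],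
        ∀ t : ℕ, t < k → margD2 μ ⟨[], hr⟩ t = fnorm f k t))

def memDeltaD1 {A B : Type*} (G : MSGame A B) (f : ℕ → ℝ) (k : ℕ) (μ : CPS1 G) : Prop :=
  k ≠ 0 →
    ((∀ (h : G.Hist) (t : ℕ), k ≤ t → margD1 μ h t = 0) ∧
     (∀ h : G.Hist, 0 < margD1 μ h 0 →
        ∀ s : Strat1 G, consistent1 G s h.1 →
          μ.p h (0, s) / margD1 μ h 0 =
            1 / (({s' : Strat1 G | consistent1 G s' h.1}).ncard : ℝ)) ∧
     (∀ hr : G.feasible [] ∧ ¬G.terminal [],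
        ∀ t : ℕ, t < k → margD1 μ ⟨[], hr⟩ t = fnorm f k t))

/-- Player 1's conditional expected payoff at `h` from strategy `s1`, own level `θ`. -/
def expU1 {A B : Type*} (G : MSGame A B) (v1 : List (A × B) → ℝ)
    (θ : ℕ) (μ : CPS2 G) (h : G.Hist) (s1 : Strat1 G) : ℝ :=
  ∑' x : ℕ × Strat2 G, μ.p h x * payU1 G v1 θ s1 x.2

def expU2 {A B : Type*} (G : MSGame A B) (v2 : List (A × B) → ℝ)
    (θ : ℕ) (μ : CPS1 G) (h : G.Hist) (s2 : Strat2 G) : ℝ :=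
  ∑' x : ℕ × Strat1 G, μ.p h x * payU2 G v2 θ x.2 s2

/-- Sequential rationality of `s1` for the level-`θ` type of player 1 w.r.t. CPS `μ`. -/
def seqRat1 {A B : Type*} (G : MSGame A B) (v1 : List (A × B) → ℝ)
    (θ : ℕ) (μ : CPS2 G) (s1 : Strat1 G) : Prop :=
  ∀ h : G.Hist, consistent1 G s1 h.1 →
    ∀ s1' : Strat1 G, consistent1 G s1' h.1 →
      expU1 G v1 θ μ h s1' ≤ expU1 G v1 θ μ h s1

def seqRat2 {A B : Type*} (G : MSGame A B) (v2 : List (A × B) → ℝ)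
    (θ : ℕ) (μ : CPS1 G) (s2 : Strat2 G) : Prop :=
  ∀ h : G.Hist, consistent2 G s2 h.1 →
    ∀ s2' : Strat2 G, consistent2 G s2' h.1 →
      expU2 G v2 θ μ h s2' ≤ expU2 G v2 θ μ h s2

/-- The dynamic Δ^κ-rationalization procedure (pairs of surviving
(level, strategy) sets for the two players). -/
def SigmaD {A B : Type*} (G : MSGame A B) (v1 v2 : List (A × B) → ℝ) (f : ℕ → ℝ) :
    ℕ → Set (ℕ × Strat1 G) × Set (ℕ × Strat2 G)
  | 0 => (Set.univ, Set.univ)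
  | n + 1 =>
      let P := SigmaD G v1 v2 f n
      ({x | x ∈ P.1 ∧ ∃ μ : CPS2 G, memDeltaD2 G f x.1 μ ∧
          (∀ h : G.Hist, (∃ y : ℕ × Strat2 G, y ∈ P.2 ∧ consistent2 G y.2 h.1) →
            ∑' y : ℕ × Strat2 G, Set.indicator P.2 (μ.p h) y = 1) ∧
          seqRat1 G v1 x.1 μ x.2},
       {x | x ∈ P.2 ∧ ∃ μ : CPS1 G, memDeltaD1 G f x.1 μ ∧
          (∀ h : G.Hist, (∃ y : ℕ × Strat1 G, y ∈ P.1 ∧ consistent1 G y.2 h.1) →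
            ∑' y : ℕ × Strat1 G, Set.indicator P.1 (μ.p h) y = 1) ∧
          seqRat2 G v2 x.1 μ x.2})

/-- The section `Σⁿ_{θ_{1k}}` (a set of strategies of player 1). -/
def SigmaDSec1 {A B : Type*} (G : MSGame A B) (v1 v2 : List (A × B) → ℝ) (f : ℕ → ℝ)
    (n k : ℕ) : Set (Strat1 G) :=
  {s | (k, s) ∈ (SigmaD G v1 v2 f n).1}

def SigmaDSec2 {A B : Type*} (G : MSGame A B) (v1 v2 : List (A × B) → ℝ) (f : ℕ → ℝ)
    (n k : ℕ) : Set (Strat2 G) :=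
  {s | (k, s) ∈ (SigmaD G v1 v2 f n).2}

/-- The DCH-procedure: step `n` returns, for each player and each level `k`, the set of
surviving strategies `Λⁿ_{θ_{ik}}`. -/
def LambdaD {A B : Type*} (G : MSGame A B) (v1 v2 : List (A × B) → ℝ) (f : ℕ → ℝ) :
    ℕ → (ℕ → Set (Strat1 G)) × (ℕ → Set (Strat2 G))
  | 0 => (fun _ => Set.univ, fun _ => Set.univ)
  | n + 1 =>
      let P := LambdaD G v1 v2 f n
      (fun k =>
        if k = n + 1 then
          {s | ∃ μ : CPS2 G, memDeltaD2 G f (n + 1) μ ∧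
            (∀ hr : G.feasible [] ∧ ¬G.terminal [],
              (∀ x : ℕ × Strat2 G, μ.p ⟨[], hr⟩ x ≠ 0 ↔ x.1 ≤ n ∧ x.2 ∈ P.2 x.1) ∧
              (∀ t : ℕ, t ≤ n → ∀ s2 s2' : Strat2 G, s2 ∈ P.2 t → s2' ∈ P.2 t →
                μ.p ⟨[], hr⟩ (t, s2) = μ.p ⟨[], hr⟩ (t, s2'))) ∧
            seqRat1 G v1 (n + 1) μ s}
        else P.1 k,
       fun k =>
        if k = n + 1 then
          {s | ∃ μ : CPS1 G, memDeltaD1 G f (n + 1) μ ∧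
            (∀ hr : G.feasible [] ∧ ¬G.terminal [],
              (∀ x : ℕ × Strat1 G, μ.p ⟨[], hr⟩ x ≠ 0 ↔ x.1 ≤ n ∧ x.2 ∈ P.1 x.1) ∧
              (∀ t : ℕ, t ≤ n → ∀ s1 s1' : Strat1 G, s1 ∈ P.1 t → s1' ∈ P.1 t →
                μ.p ⟨[], hr⟩ (t, s1) = μ.p ⟨[], hr⟩ (t, s1'))) ∧
            seqRat2 G v2 (n + 1) μ s}
        else P.2 k)

/-- `Λⁿ_{θ_{1k}}`. -/
def LambdaDSec1 {A B : Type*} (G : MSGame A B) (v1 v2 : List (A × B) → ℝ) (f : ℕ → ℝ)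
    (n k : ℕ) : Set (Strat1 G) :=
  (LambdaD G v1 v2 f n).1 k

/-- `Λⁿ_{θ_{2k}}`. -/
def LambdaDSec2 {A B : Type*} (G : MSGame A B) (v1 v2 : List (A × B) → ℝ) (f : ℕ → ℝ)
    (n k : ℕ) : Set (Strat2 G) :=
  (LambdaD G v1 v2 f n).2 k

section UniformLevelZero

variable {S : Type*}

def levelZeroUniform (X : Set S) : ℕ × S → ℝ :=
  ({0} ×ˢ X).indicator fun _ => ((X.ncard : ℝ))⁻¹

lemma tsum_indicator_zero_prod_const (X : Set S) (c : ℝ) :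
    ∑' x : ℕ × S, ({0} ×ˢ X).indicator (fun _ => c) x = X.ncard * c := by
  rw [← tsum_subtype, tsum_const, nsmul_eq_mul, Nat.card_coe_set_eq, Set.singleton_prod,
    Set.ncard_image_of_injective _ (Prod.mk_right_injective 0)]

lemma levelZeroUniform_nonneg (X : Set S) (x : ℕ × S) : 0 ≤ levelZeroUniform X x :=
  Set.indicator_nonneg (fun _ _ => by positivity) x

lemma mem_of_levelZeroUniform_ne_zero {X : Set S} {x : ℕ × S} (hx : levelZeroUniform X x ≠ 0) :
    x.1 = 0 ∧ x.2 ∈ X :=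
  Set.mem_of_indicator_ne_zero (s := {0} ×ˢ X) hx

lemma hasSum_levelZeroUniform {X : Set S} (hfin : X.Finite) (hne : X.Nonempty) :
    HasSum (levelZeroUniform X) 1 := by
  have hsum : Summable (levelZeroUniform X) :=
    summable_of_hasFiniteSupport (((Set.finite_singleton 0).prod hfin).subset
      Set.support_indicator_subset)
  rw [hsum.hasSum_iff, levelZeroUniform, tsum_indicator_zero_prod_const]
  exact mul_inv_cancel₀ (by exact_mod_cast ((Set.ncard_pos hfin).2 hne).ne')

/-- The chain rule: conditioning the uniform distribution on `X` to `Y ⊆ X` gives the uniform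
distribution on `Y`. -/
lemma levelZeroUniform_chain {X Y : Set S} (hYX : Y ⊆ X) (hfin : Y.Finite) (hne : Y.Nonempty)
    {x : ℕ × S} (hx : x.2 ∈ Y) :
    levelZeroUniform X x =
      levelZeroUniform Y x * ∑' y : ℕ × S, if y.2 ∈ Y then levelZeroUniform X y else 0 := by
  have hrestrict : (fun y : ℕ × S => if y.2 ∈ Y then levelZeroUniform X y else 0) =
      ({0} ×ˢ Y).indicator fun _ => ((X.ncard : ℝ))⁻¹ := by
    funext y
    by_cases hy : y.2 ∈ Y
    · simp [levelZeroUniform, Set.indicator_apply, hy, hYX hy]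
    · simp [hy]
  have hY : (Y.ncard : ℝ) ≠ 0 := by exact_mod_cast ((Set.ncard_pos hfin).2 hne).ne'
  rw [hrestrict, tsum_indicator_zero_prod_const]
  by_cases hx0 : x.1 = 0
  · simp [levelZeroUniform, hx0, hx, hYX hx, hY]
  · simp [levelZeroUniform, hx0]

end UniformLevelZero

lemma List.head_eq_of_cons_isSuffix {α : Type*} {a b : α} {t l : List α}
    (ha : a :: t <:+ l) (hb : b :: t <:+ l) : a = b :=
  List.head_eq_of_cons_eq ((List.suffix_of_suffix_length_le ha hb le_rfl).eq_of_length rfl)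

namespace MSGame

variable {A B : Type*} {G : MSGame A B}

lemma feasible_of_isSuffix {l l' : List (A × B)} (hsuf : l <:+ l') (hl' : G.feasible l') :
    G.feasible l := by
  obtain ⟨pre, rfl⟩ := hsuf
  induction pre with
  | nil => exact hl'
  | cons _ _ ih => exact ih hl'.1

namespace WellFormed

lemma feas1_nonempty (hG : G.WellFormed) (h : G.Hist) : (G.feas1 h.1).Nonempty :=
  Finset.nonempty_iff_ne_empty.2 fun h1 => h.2.2 ⟨h1, (hG.1 _).1 h1⟩

lemma feas2_nonempty (hG : G.WellFormed) (h : G.Hist) : (G.feas2 h.1).Nonempty :=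
  Finset.nonempty_iff_ne_empty.2 fun h2 => h.2.2 ⟨(hG.1 _).2 h2, h2⟩

lemma finite_hist (hG : G.WellFormed) : Finite G.Hist :=
  (hG.2.1.subset fun _ hh => hh.1).to_subtype

lemma exists_feasible_profile_following (hG : G.WellFormed) {l : List (A × B)}
    (hl : G.feasible l) :
    ∃ σ : G.Hist → A × B, (∀ h, (σ h).1 ∈ G.feas1 h.1 ∧ (σ h).2 ∈ G.feas2 h.1) ∧
      ∀ (h : G.Hist) (p : A × B), p :: h.1 <:+ l → σ h = p := by
  refine ⟨fun h => if hp : ∃ p : A × B, p :: h.1 <:+ l then hp.choose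
    else ((hG.feas1_nonempty h).choose, (hG.feas2_nonempty h).choose), fun h => ?_,
    fun h p hp => ?_⟩
  · beta_reduce
    split_ifs with hp
    · exact (feasible_of_isSuffix hp.choose_spec hl).2.2
    · exact ⟨(hG.feas1_nonempty h).choose_spec, (hG.feas2_nonempty h).choose_spec⟩
  · have hex : ∃ q : A × B, q :: h.1 <:+ l := ⟨p, hp⟩
    beta_reduce
    rw [dif_pos hex]
    exact List.head_eq_of_cons_isSuffix hex.choose_spec hp

end WellFormed

end MSGame

section Strategies

variable {A B : Type*} {G : MSGame A B}

lemma Strat1.act_injective : Function.Injective (Strat1.act (G := G)) := by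
  rintro ⟨_, _⟩ ⟨_, _⟩ rfl
  rfl

lemma Strat2.act_injective : Function.Injective (Strat2.act (G := G)) := by
  rintro ⟨_, _⟩ ⟨_, _⟩ rfl
  rfl

lemma MSGame.WellFormed.finite_strat1 (hG : G.WellFormed) : Finite (Strat1 G) := by
  have := hG.finite_hist
  exact Finite.of_injective (fun s h => (⟨s.act h, s.mem h⟩ : G.feas1 h.1))
    fun s t hst => Strat1.act_injective (funext fun h => congrArg Subtype.val (congrFun hst h))

lemma MSGame.WellFormed.finite_strat2 (hG : G.WellFormed) : Finite (Strat2 G) := by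
  have := hG.finite_hist
  exact Finite.of_injective (fun s h => (⟨s.act h, s.mem h⟩ : G.feas2 h.1))
    fun s t hst => Strat2.act_injective (funext fun h => congrArg Subtype.val (congrFun hst h))

lemma MSGame.WellFormed.exists_consistent1 (hG : G.WellFormed) {l : List (A × B)}
    (hl : G.feasible l) : ∃ s : Strat1 G, consistent1 G s l := by
  obtain ⟨σ, hσ, hfollow⟩ := hG.exists_feasible_profile_following hl
  exact ⟨⟨fun h => (σ h).1, fun h => (hσ h).1⟩, fun h p pre hl =>
    congrArg Prod.fst (hfollow h p ⟨pre, hl.symm⟩)⟩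

lemma MSGame.WellFormed.exists_consistent2 (hG : G.WellFormed) {l : List (A × B)}
    (hl : G.feasible l) : ∃ s : Strat2 G, consistent2 G s l := by
  obtain ⟨σ, hσ, hfollow⟩ := hG.exists_feasible_profile_following hl
  exact ⟨⟨fun h => (σ h).2, fun h => (hσ h).2⟩, fun h p pre hl =>
    congrArg Prod.snd (hfollow h p ⟨pre, hl.symm⟩)⟩

lemma consistent1_of_isSuffix {s : Strat1 G} {l l' : List (A × B)} (hsuf : l <:+ l')
    (h : consistent1 G s l') : consistent1 G s l := by
  obtain ⟨pre, rfl⟩ := hsuf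
  rintro h' p lst rfl
  exact h h' p (pre ++ lst) (List.append_assoc _ _ _).symm

lemma consistent2_of_isSuffix {s : Strat2 G} {l l' : List (A × B)} (hsuf : l <:+ l')
    (h : consistent2 G s l') : consistent2 G s l := by
  obtain ⟨pre, rfl⟩ := hsuf
  rintro h' p lst rfl
  exact h h' p (pre ++ lst) (List.append_assoc _ _ _).symm

end Strategies

section Beliefs

variable {A B : Type*} {G : MSGame A B}

def CPS2.levelZero (hG : G.WellFormed) : CPS2 G where
  p h := levelZeroUniform {s | consistent2 G s h.1}
  nonneg _ := levelZeroUniform_nonneg _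
  supp _ _ hx := (mem_of_levelZeroUniform_ne_zero hx).2
  hasSum_one h :=
    have := hG.finite_strat2
    hasSum_levelZeroUniform (Set.toFinite _) (hG.exists_consistent2 h.2.1)
  chain _ h'' hsuf _ _ hx :=
    have := hG.finite_strat2
    levelZeroUniform_chain (fun _ => consistent2_of_isSuffix hsuf) (Set.toFinite _)
      (hG.exists_consistent2 h''.2.1) hx

def CPS1.levelZero (hG : G.WellFormed) : CPS1 G where
  p h := levelZeroUniform {s | consistent1 G s h.1}
  nonneg _ := levelZeroUniform_nonneg _
  supp _ _ hx := (mem_of_levelZeroUniform_ne_zero hx).2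
  hasSum_one h :=
    have := hG.finite_strat1
    hasSum_levelZeroUniform (Set.toFinite _) (hG.exists_consistent1 h.2.1)
  chain _ h'' hsuf _ _ hx :=
    have := hG.finite_strat1
    levelZeroUniform_chain (fun _ => consistent1_of_isSuffix hsuf) (Set.toFinite _)
      (hG.exists_consistent1 h''.2.1) hx

/-- The paper's `μ(T | h) = 1` at every `h` consistent with some element of `T`. -/
def CPS2.StronglyBelieves (μ : CPS2 G) (T : Set (ℕ × Strat2 G)) : Prop :=
  ∀ h : G.Hist, (∃ y : ℕ × Strat2 G, y ∈ T ∧ consistent2 G y.2 h.1) →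
    ∑' y : ℕ × Strat2 G, T.indicator (μ.p h) y = 1

def CPS1.StronglyBelieves (μ : CPS1 G) (T : Set (ℕ × Strat1 G)) : Prop :=
  ∀ h : G.Hist, (∃ y : ℕ × Strat1 G, y ∈ T ∧ consistent1 G y.2 h.1) →
    ∑' y : ℕ × Strat1 G, T.indicator (μ.p h) y = 1

lemma CPS2.stronglyBelieves_of_support_subset {μ : CPS2 G} {T : Set (ℕ × Strat2 G)}
    (hT : ∀ h, Function.support (μ.p h) ⊆ T) : μ.StronglyBelieves T := fun h _ => by
  rw [Set.indicator_eq_self.2 (hT h), (μ.hasSum_one h).tsum_eq]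

lemma CPS1.stronglyBelieves_of_support_subset {μ : CPS1 G} {T : Set (ℕ × Strat1 G)}
    (hT : ∀ h, Function.support (μ.p h) ⊆ T) : μ.StronglyBelieves T := fun h _ => by
  rw [Set.indicator_eq_self.2 (hT h), (μ.hasSum_one h).tsum_eq]

lemma CPS2.StronglyBelieves.anti {μ : CPS2 G} {T T' : Set (ℕ × Strat2 G)}
    (hμ : μ.StronglyBelieves T) (hT' : T' ⊆ T)
    (hsupp : ∀ h, T ∩ Function.support (μ.p h) ⊆ T') :
    μ.StronglyBelieves T' := by
  rintro h ⟨y, hy, hc⟩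
  have hsame : T ∩ Function.support (μ.p h) = T' ∩ Function.support (μ.p h) :=
    subset_antisymm (fun x hx => ⟨hsupp h hx, hx.2⟩) (Set.inter_subset_inter_left _ hT')
  rw [← Set.indicator_inter_support, ← hsame, Set.indicator_inter_support]
  exact hμ h ⟨y, hT' hy, hc⟩

lemma CPS1.StronglyBelieves.anti {μ : CPS1 G} {T T' : Set (ℕ × Strat1 G)}
    (hμ : μ.StronglyBelieves T) (hT' : T' ⊆ T)
    (hsupp : ∀ h, T ∩ Function.support (μ.p h) ⊆ T') :
    μ.StronglyBelieves T' := by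
  rintro h ⟨y, hy, hc⟩
  have hsame : T ∩ Function.support (μ.p h) = T' ∩ Function.support (μ.p h) :=
    subset_antisymm (fun x hx => ⟨hsupp h hx, hx.2⟩) (Set.inter_subset_inter_left _ hT')
  rw [← Set.indicator_inter_support, ← hsame, Set.indicator_inter_support]
  exact hμ h ⟨y, hT' hy, hc⟩

lemma CPS2.level_lt_of_memDeltaD2 {f : ℕ → ℝ} {k : ℕ} {μ : CPS2 G} (hk : k ≠ 0)
    (hμ : memDeltaD2 G f k μ) {h : G.Hist} {x : ℕ × Strat2 G} (hx : μ.p h x ≠ 0) :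
    x.1 < k := by
  by_contra! hkx
  have hle : μ.p h (x.1, x.2) ≤ margD2 μ h x.1 :=
    ((μ.hasSum_one h).summable.prod_factor x.1).le_tsum x.2 fun s _ => μ.nonneg h (x.1, s)
  rw [(hμ hk).1 h x.1 hkx] at hle
  exact hx (le_antisymm hle (μ.nonneg h x))

lemma CPS1.level_lt_of_memDeltaD1 {f : ℕ → ℝ} {k : ℕ} {μ : CPS1 G} (hk : k ≠ 0)
    (hμ : memDeltaD1 G f k μ) {h : G.Hist} {x : ℕ × Strat1 G} (hx : μ.p h x ≠ 0) :
    x.1 < k := by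
  by_contra! hkx
  have hle : μ.p h (x.1, x.2) ≤ margD1 μ h x.1 :=
    ((μ.hasSum_one h).summable.prod_factor x.1).le_tsum x.2 fun s _ => μ.nonneg h (x.1, s)
  rw [(hμ hk).1 h x.1 hkx] at hle
  exact hx (le_antisymm hle (μ.nonneg h x))

lemma seqRat1_zero (v1 : List (A × B) → ℝ) (μ : CPS2 G) (s : Strat1 G) :
    seqRat1 G v1 0 μ s := by
  simp [seqRat1, expU1, payU1]

lemma seqRat2_zero (v2 : List (A × B) → ℝ) (μ : CPS1 G) (s : Strat2 G) :
    seqRat2 G v2 0 μ s := by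
  simp [seqRat2, expU2, payU2]

end Beliefs

section Rationalization

variable {A B : Type*} {G : MSGame A B} {v1 v2 : List (A × B) → ℝ} {f : ℕ → ℝ}

lemma mem_sigmaD_succ_fst {n : ℕ} {x : ℕ × Strat1 G} :
    x ∈ (SigmaD G v1 v2 f (n + 1)).1 ↔ x ∈ (SigmaD G v1 v2 f n).1 ∧
      ∃ μ : CPS2 G, memDeltaD2 G f x.1 μ ∧ μ.StronglyBelieves (SigmaD G v1 v2 f n).2 ∧
        seqRat1 G v1 x.1 μ x.2 :=
  Iff.rfl

lemma mem_sigmaD_succ_snd {n : ℕ} {x : ℕ × Strat2 G} :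
    x ∈ (SigmaD G v1 v2 f (n + 1)).2 ↔ x ∈ (SigmaD G v1 v2 f n).2 ∧
      ∃ μ : CPS1 G, memDeltaD1 G f x.1 μ ∧ μ.StronglyBelieves (SigmaD G v1 v2 f n).1 ∧
        seqRat2 G v2 x.1 μ x.2 :=
  Iff.rfl

lemma sigmaD_fst_antitone : Antitone fun n => (SigmaD G v1 v2 f n).1 :=
  antitone_nat_of_succ_le fun _ _ hx => hx.1

lemma sigmaD_snd_antitone : Antitone fun n => (SigmaD G v1 v2 f n).2 :=
  antitone_nat_of_succ_le fun _ _ hx => hx.1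

lemma level_zero_mem_sigmaD (hG : G.WellFormed) (n : ℕ) :
    (∀ s, (0, s) ∈ (SigmaD G v1 v2 f n).1) ∧ ∀ s, (0, s) ∈ (SigmaD G v1 v2 f n).2 := by
  induction n with
  | zero => exact ⟨fun _ => trivial, fun _ => trivial⟩
  | succ n ih =>
    refine ⟨fun s => ⟨ih.1 s, CPS2.levelZero hG, fun h0 => (h0 rfl).elim, ?_,
      seqRat1_zero v1 _ s⟩, fun s => ⟨ih.2 s, CPS1.levelZero hG, fun h0 => (h0 rfl).elim, ?_,
      seqRat2_zero v2 _ s⟩⟩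
    · refine CPS2.stronglyBelieves_of_support_subset fun h ⟨t, s'⟩ hx => ?_
      obtain ⟨rfl, -⟩ := mem_of_levelZeroUniform_ne_zero (X := {s | consistent2 G s h.1}) hx
      exact ih.2 s'
    · refine CPS1.stronglyBelieves_of_support_subset fun h ⟨t, s'⟩ hx => ?_
      obtain ⟨rfl, -⟩ := mem_of_levelZeroUniform_ne_zero (X := {s | consistent1 G s h.1}) hx
      exact ih.1 s'

lemma sigmaDSec1_stable_of_lower_snd {k : ℕ} (hk : k ≠ 0)
    (hlow : ∀ j < k, ∀ t, j ≤ t → SigmaDSec2 G v1 v2 f t j = SigmaDSec2 G v1 v2 f j j)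
    {t : ℕ} (hkt : k ≤ t) : SigmaDSec1 G v1 v2 f t k = SigmaDSec1 G v1 v2 f k k := by
  refine subset_antisymm (fun s hs => sigmaD_fst_antitone hkt hs) ?_
  obtain ⟨m, rfl⟩ := Nat.exists_eq_succ_of_ne_zero hk
  induction t, hkt using Nat.le_induction with
  | base => exact le_rfl
  | succ t hkt ih =>
    intro s hs
    obtain ⟨-, μ, hΔ, hbel, hrat⟩ := mem_sigmaD_succ_fst.1 hs
    refine ⟨ih hs, μ, hΔ,
      hbel.anti (sigmaD_snd_antitone (by omega)) fun h x ⟨hxm, hx⟩ => ?_, hrat⟩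
    have hxk := CPS2.level_lt_of_memDeltaD2 hk hΔ hx
    have hxm' : x.2 ∈ SigmaDSec2 G v1 v2 f m x.1 := hxm
    rwa [hlow _ hxk m (by omega), ← hlow _ hxk t (by omega)] at hxm'

lemma sigmaDSec2_stable_of_lower_fst {k : ℕ} (hk : k ≠ 0)
    (hlow : ∀ j < k, ∀ t, j ≤ t → SigmaDSec1 G v1 v2 f t j = SigmaDSec1 G v1 v2 f j j)
    {t : ℕ} (hkt : k ≤ t) : SigmaDSec2 G v1 v2 f t k = SigmaDSec2 G v1 v2 f k k := by
  refine subset_antisymm (fun s hs => sigmaD_snd_antitone hkt hs) ?_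
  obtain ⟨m, rfl⟩ := Nat.exists_eq_succ_of_ne_zero hk
  induction t, hkt using Nat.le_induction with
  | base => exact le_rfl
  | succ t hkt ih =>
    intro s hs
    obtain ⟨-, μ, hΔ, hbel, hrat⟩ := mem_sigmaD_succ_snd.1 hs
    refine ⟨ih hs, μ, hΔ,
      hbel.anti (sigmaD_fst_antitone (by omega)) fun h x ⟨hxm, hx⟩ => ?_, hrat⟩
    have hxk := CPS1.level_lt_of_memDeltaD1 hk hΔ hx
    have hxm' : x.2 ∈ SigmaDSec1 G v1 v2 f m x.1 := hxm
    rwa [hlow _ hxk m (by omega), ← hlow _ hxk t (by omega)] at hxm'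

end Rationalization

theorem sigmaD_stabilizes_at_level_general {A B : Type*} (G : MSGame A B) (hG : G.WellFormed)
    (v1 v2 : List (A × B) → ℝ)
    (f : ℕ → ℝ) :
    ∀ k t : ℕ, k ≤ t →
      SigmaDSec1 G v1 v2 f t k = SigmaDSec1 G v1 v2 f k k ∧
      SigmaDSec2 G v1 v2 f t k = SigmaDSec2 G v1 v2 f k k := by
  intro k
  induction k using Nat.strong_induction_on with
  | _ k ih =>
  intro t hkt
  rcases Nat.eq_zero_or_pos k with rfl | hk
  · have hzero := level_zero_mem_sigmaD (v1 := v1) (v2 := v2) (f := f) hG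
    exact ⟨Set.ext fun s => iff_of_true ((hzero t).1 s) ((hzero 0).1 s),
      Set.ext fun s => iff_of_true ((hzero t).2 s) ((hzero 0).2 s)⟩
  · exact ⟨sigmaDSec1_stable_of_lower_snd hk.ne' (fun j hj t' hjt => (ih j hj t' hjt).2) hkt,
      sigmaDSec2_stable_of_lower_fst hk.ne' (fun j hj t' hjt => (ih j hj t' hjt).1) hkt⟩

/-- dynamic version of Proposition 1: the dynamic Δ^κ-rationalization
procedure stabilizes for the level-k type after k steps, for each player. -/
theorem sigmaD_stabilizes_at_level {A B : Type*} (G : MSGame A B) (hG : G.WellFormed)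
    (v1 v2 : List (A × B) → ℝ)
    (f : ℕ → ℝ) (hf : ∀ n, 0 < f n) (hfsum : HasSum f 1) :
    ∀ k t : ℕ, k ≤ t →
      SigmaDSec1 G v1 v2 f t k = SigmaDSec1 G v1 v2 f k k ∧
      SigmaDSec2 G v1 v2 f t k = SigmaDSec2 G v1 v2 f k k :=
  sigmaD_stabilizes_at_level_general G hG v1 v2 f
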